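/- arXiv:2210.05213 — 4 statements merged into one kernel-verified Lean document; each statement's English description precedes it below -/
import Mathlib

section
/- Let σ̄ ≥ σ̲ > 0 and G(a) = ½(σ̄² a⁺ − σ̲² a⁻). Suppose F: ℝ → ℝ is differentiable at x₀ with F(x₀) = 0 and F'(x₀) > 0, and suppose W: ℝ → ℝ is differentiable at x₀ with W(x₀) + G(F(x₀)) = 0 and W(x) + G(F(x)) ≥ 0 for all x in a neighborhood of x₀. Then W'(x₀) + ½ σ̄² F'(x₀) ≥ 0 and W'(x₀) + ½ σ̲² F'(x₀) ≤ 0; consequently there exists v ∈ [σ̲², σ̄²] with W'(x₀) = −½ v F'(x₀). -/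
/-! On the right of `x₀` the function `F` is positive, so `G ∘ F = σ̄²/2 · F` there, and on the
left it is negative, so `G ∘ F = σ̲²/2 · F`. Hence `W + G ∘ F` has one-sided derivatives
`W'(x₀) + σ̄²/2 · F'(x₀)` and `W'(x₀) + σ̲²/2 · F'(x₀)` at its local minimum `x₀`, the first of
which is nonnegative and the second nonpositive. -/

open Set Filter Topology

theorem IsLocalMin.nonneg_of_hasDerivWithinAt_Ioi {f : ℝ → ℝ} {a f' : ℝ} (h : IsLocalMin f a)
    (hf : HasDerivWithinAt f f' (Ioi a) a) : 0 ≤ f' := by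
  rw [hasDerivWithinAt_iff_tendsto_slope' self_notMem_Ioi] at hf
  refine ge_of_tendsto hf ?_
  filter_upwards [nhdsWithin_le_nhds h, self_mem_nhdsWithin] with x hx (hax : a < x)
  exact (slope_nonneg_iff_of_le hax.le).2 hx

theorem IsLocalMin.nonpos_of_hasDerivWithinAt_Iio {f : ℝ → ℝ} {a f' : ℝ} (h : IsLocalMin f a)
    (hf : HasDerivWithinAt f f' (Iio a) a) : f' ≤ 0 := by
  rw [hasDerivWithinAt_iff_tendsto_slope' self_notMem_Iio] at hf
  refine le_of_tendsto hf ?_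
  filter_upwards [nhdsWithin_le_nhds h, self_mem_nhdsWithin] with x hx (hxa : x < a)
  rw [slope_comm]
  exact (slope_nonpos_iff_of_le hxa.le).2 hx

theorem HasDerivAt.eventually_lt_nhdsGT {f : ℝ → ℝ} {a f' : ℝ} (hf : HasDerivAt f f' a)
    (hf' : 0 < f') : ∀ᶠ x in 𝓝[>] a, f a < f x := by
  filter_upwards [(hasDerivAt_iff_tendsto_slope_left_right.1 hf).2.eventually
    (eventually_gt_nhds hf'), self_mem_nhdsWithin] with x hx (hax : a < x)
  exact (slope_pos_iff hax).1 hx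

theorem HasDerivAt.eventually_gt_nhdsLT {f : ℝ → ℝ} {a f' : ℝ} (hf : HasDerivAt f f' a)
    (hf' : 0 < f') : ∀ᶠ x in 𝓝[<] a, f x < f a := by
  filter_upwards [(hasDerivAt_iff_tendsto_slope_left_right.1 hf).1.eventually
    (eventually_gt_nhds hf'), self_mem_nhdsWithin] with x hx (hxa : x < a)
  exact (slope_pos_iff_gt hxa).1 hx

theorem HasDerivAt.hasDerivWithinAt_Ioi_comp_of_eq_mul {g F : ℝ → ℝ} {a c f' : ℝ}
    (hg : ∀ y, 0 ≤ y → g y = c * y) (hF : HasDerivAt F f' a) (hF0 : F a = 0) (hf' : 0 < f') :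
    HasDerivWithinAt (g ∘ F) (c * f') (Ioi a) a := by
  refine (hF.const_mul c).hasDerivWithinAt.congr_of_eventuallyEq ?_ (by simp [hF0, hg])
  filter_upwards [hF.eventually_lt_nhdsGT hf'] with x hx
  exact hg _ (hF0 ▸ hx.le)

theorem HasDerivAt.hasDerivWithinAt_Iio_comp_of_eq_mul {g F : ℝ → ℝ} {a c f' : ℝ}
    (hg : ∀ y, y ≤ 0 → g y = c * y) (hF : HasDerivAt F f' a) (hF0 : F a = 0) (hf' : 0 < f') :
    HasDerivWithinAt (g ∘ F) (c * f') (Iio a) a := by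
  refine (hF.const_mul c).hasDerivWithinAt.congr_of_eventuallyEq ?_ (by simp [hF0, hg])
  filter_upwards [hF.eventually_gt_nhdsLT hf'] with x hx
  exact hg _ (hF0 ▸ hx.le)

theorem deriv_sandwich_general (σb σu : ℝ)
    (G : ℝ → ℝ)
    (hG : ∀ a : ℝ, G a = (σb ^ 2 * max a 0 - σu ^ 2 * max (-a) 0) / 2)
    (F W : ℝ → ℝ) (x₀ f' w' : ℝ)
    (hF : HasDerivAt F f' x₀) (hF0 : F x₀ = 0) (hf' : 0 < f')
    (hW : HasDerivAt W w' x₀) (hW0 : W x₀ + G (F x₀) = 0)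
    (hpos : ∀ᶠ x in nhds x₀, 0 ≤ W x + G (F x)) :
    0 ≤ w' + (1 / 2) * σb ^ 2 * f' ∧ w' + (1 / 2) * σu ^ 2 * f' ≤ 0 ∧
      ∃ v ∈ Icc (σu ^ 2) (σb ^ 2), w' = -(1 / 2) * v * f' := by
  have hmin : IsLocalMin (fun x => W x + G (F x)) x₀ := by
    simpa only [IsLocalMin, IsMinFilter, hW0] using hpos
  have hG_pos : ∀ y, 0 ≤ y → G y = σb ^ 2 / 2 * y := fun y hy => by
    rw [hG, max_eq_left hy, max_eq_right (neg_nonpos.2 hy)]; ring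
  have hG_neg : ∀ y, y ≤ 0 → G y = σu ^ 2 / 2 * y := fun y hy => by
    rw [hG, max_eq_right hy, max_eq_left (neg_nonneg.2 hy)]; ring
  have hright : 0 ≤ w' + σb ^ 2 / 2 * f' := hmin.nonneg_of_hasDerivWithinAt_Ioi
    (hW.hasDerivWithinAt.add (hF.hasDerivWithinAt_Ioi_comp_of_eq_mul hG_pos hF0 hf'))
  have hleft : w' + σu ^ 2 / 2 * f' ≤ 0 := hmin.nonpos_of_hasDerivWithinAt_Iio
    (hW.hasDerivWithinAt.add (hF.hasDerivWithinAt_Iio_comp_of_eq_mul hG_neg hF0 hf'))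
  refine ⟨by linarith, by linarith, -2 * w' / f', ⟨?_, ?_⟩, by field_simp⟩
  · rw [le_div_iff₀ hf']; linarith
  · rw [div_le_iff₀ hf']; linarith

theorem deriv_sandwich (σb σu : ℝ) (hσu : 0 < σu) (hσ : σu ≤ σb)
    (G : ℝ → ℝ)
    (hG : ∀ a : ℝ, G a = (σb ^ 2 * max a 0 - σu ^ 2 * max (-a) 0) / 2)
    (F W : ℝ → ℝ) (x₀ f' w' : ℝ)
    (hF : HasDerivAt F f' x₀) (hF0 : F x₀ = 0) (hf' : 0 < f')
    (hW : HasDerivAt W w' x₀) (hW0 : W x₀ + G (F x₀) = 0)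
    (hpos : ∀ᶠ x in nhds x₀, 0 ≤ W x + G (F x)) :
    0 ≤ w' + (1 / 2) * σb ^ 2 * f' ∧ w' + (1 / 2) * σu ^ 2 * f' ≤ 0 ∧
      ∃ v ∈ Icc (σu ^ 2) (σb ^ 2), w' = -(1 / 2) * v * f' :=
  deriv_sandwich_general σb σu G hG F W x₀ f' w' hF hF0 hf' hW hW0 hpos
end

section
/- For T > 0, let P solve P'(s) = −(5P² + 10P + 1)/(1+P) with P(T) = 1 on [0,T], with P(s) > 0. Define V(t,x) = ½ P(t) x². Then V satisfies the HJB equation ∂_t V(t,x) + inf_{v ∈ ℝ} G( (x+v)² ∂²_{xx}V(t,x) + 2(4x+v) ∂_x V(t,x) + x² + v² ) = 0 with V(T,x) = ½ x², where G(a) = ½(a⁺ − 0.2 a⁻); moreover the infimum over v is attained at v = −2P(t)x/(1+P(t)), and at this point the argument of G is nonnegative so G acts linearly with coefficient ½. -/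
/-! The argument of `G` is a quadratic in the control `v` with leading coefficient `1 + P t > 0`;
completing the square gives its minimiser `v* = -2 P x / (1 + P)` and minimum value
`x² (5P² + 10P + 1) / (1 + P) ≥ 0`. Since `G` is monotone, the infimum of `G` over controls is
`G` of this minimum, which equals half of it, and the Riccati equation makes `∂ₜV` cancel it. -/

open Set

section SublinearExpectation

variable {G : ℝ → ℝ} {c : ℝ}

lemma monotone_of_eq_max_sub_mul_max (hc : 0 ≤ c)
    (hG : ∀ a, G a = (max a 0 - c * max (-a) 0) / 2) : Monotone G := by
  intro a b hab
  have hpos : max a 0 ≤ max b 0 := max_le_max hab le_rfl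
  have hneg : c * max (-b) 0 ≤ c * max (-a) 0 :=
    mul_le_mul_of_nonneg_left (max_le_max (neg_le_neg hab) le_rfl) hc
  rw [hG a, hG b]
  linarith

lemma eq_half_of_eq_max_sub_mul_max (hG : ∀ a, G a = (max a 0 - c * max (-a) 0) / 2)
    {a : ℝ} (ha : 0 ≤ a) : G a = 1 / 2 * a := by
  rw [hG, max_eq_left ha, max_eq_right (neg_nonpos.2 ha)]
  ring

end SublinearExpectation

lemma Monotone.isLeast_range_comp {α : Type*} {f : α → ℝ} {G : ℝ → ℝ} (hG : Monotone G)
    {v₀ : α} (hmin : ∀ v, f v₀ ≤ f v) : IsLeast (range (G ∘ f)) (G (f v₀)) := by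
  rw [range_comp]
  exact hG.map_isLeast ⟨mem_range_self v₀, forall_mem_range.2 hmin⟩

section Hamiltonian

variable (p x : ℝ)

/-- `(x + v)² ∂²ₓₓV + 2 (4x + v) ∂ₓV + x² + v²` for `V = ½ p x²`. -/
def hamiltonianArg (v : ℝ) : ℝ :=
  (x + v) ^ 2 * p + 2 * (4 * x + v) * (p * x) + x ^ 2 + v ^ 2

noncomputable def optimalControl : ℝ := -2 * p * x / (1 + p)

variable {p}

lemma hamiltonianArg_eq_sq_add (hp : 1 + p ≠ 0) (v : ℝ) :
    hamiltonianArg p x v = (1 + p) * (v - optimalControl p x) ^ 2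
      + x ^ 2 * (5 * p ^ 2 + 10 * p + 1) / (1 + p) := by
  unfold hamiltonianArg optimalControl
  field_simp
  ring

lemma hamiltonianArg_optimalControl (hp : 1 + p ≠ 0) :
    hamiltonianArg p x (optimalControl p x) = x ^ 2 * (5 * p ^ 2 + 10 * p + 1) / (1 + p) := by
  rw [hamiltonianArg_eq_sq_add x hp, sub_self]
  ring

lemma hamiltonianArg_optimalControl_le (hp : 0 < 1 + p) (v : ℝ) :
    hamiltonianArg p x (optimalControl p x) ≤ hamiltonianArg p x v := by
  rw [hamiltonianArg_optimalControl x hp.ne', hamiltonianArg_eq_sq_add x hp.ne']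
  have := mul_nonneg hp.le (sq_nonneg (v - optimalControl p x))
  linarith

lemma hamiltonianArg_optimalControl_nonneg (hp : 0 ≤ p) :
    0 ≤ hamiltonianArg p x (optimalControl p x) := by
  rw [hamiltonianArg_optimalControl x (by positivity)]
  positivity

end Hamiltonian

theorem example2_HJB_general (T : ℝ)
    (G : ℝ → ℝ)
    (hG : ∀ a : ℝ, G a = (max a 0 - 0.2 * max (-a) 0) / 2)
    (P P' : ℝ → ℝ)
    (hderiv : ∀ s ∈ Icc (0 : ℝ) T, HasDerivAt P (P' s) s)
    (hric : ∀ s ∈ Icc (0 : ℝ) T,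
      P' s = -(5 * (P s) ^ 2 + 10 * P s + 1) / (1 + P s))
    (hPT : P T = 1) (hpos : ∀ s ∈ Icc (0 : ℝ) T, 0 < P s)
    (V : ℝ → ℝ → ℝ) (hV : ∀ t x, V t x = (1 / 2) * P t * x ^ 2)
    (t x : ℝ) (ht : t ∈ Icc (0 : ℝ) T) :
    (HasDerivAt (fun s => V s x) ((1 / 2) * P' t * x ^ 2) t) ∧
    ((1 / 2) * P' t * x ^ 2 +
        sInf (Set.range (fun v : ℝ =>
          G ((x + v) ^ 2 * P t + 2 * (4 * x + v) * (P t * x) + x ^ 2 + v ^ 2))) = 0) ∧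
    (V T x = (1 / 2) * x ^ 2) ∧
    (∀ v : ℝ,
      G ((x + (-2 * P t * x / (1 + P t))) ^ 2 * P t
          + 2 * (4 * x + (-2 * P t * x / (1 + P t))) * (P t * x) + x ^ 2
          + (-2 * P t * x / (1 + P t)) ^ 2)
        ≤ G ((x + v) ^ 2 * P t + 2 * (4 * x + v) * (P t * x) + x ^ 2 + v ^ 2)) ∧
    (0 ≤ (x + (-2 * P t * x / (1 + P t))) ^ 2 * P t
        + 2 * (4 * x + (-2 * P t * x / (1 + P t))) * (P t * x) + x ^ 2
        + (-2 * P t * x / (1 + P t)) ^ 2) ∧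
    (G ((x + (-2 * P t * x / (1 + P t))) ^ 2 * P t
          + 2 * (4 * x + (-2 * P t * x / (1 + P t))) * (P t * x) + x ^ 2
          + (-2 * P t * x / (1 + P t)) ^ 2)
      = (1 / 2) * ((x + (-2 * P t * x / (1 + P t))) ^ 2 * P t
          + 2 * (4 * x + (-2 * P t * x / (1 + P t))) * (P t * x) + x ^ 2
          + (-2 * P t * x / (1 + P t)) ^ 2)) := by
  have hp : 0 < P t := hpos t ht
  have hmin := hamiltonianArg_optimalControl_le x (by linarith : 0 < 1 + P t)
  have hnonneg := hamiltonianArg_optimalControl_nonneg x hp.le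
  have hGmono := monotone_of_eq_max_sub_mul_max (by norm_num) hG
  have hGlin := eq_half_of_eq_max_sub_mul_max hG hnonneg
  refine ⟨?_, ?_, by rw [hV, hPT]; ring, fun v => hGmono (hmin v), hnonneg, hGlin⟩
  · simp only [hV]
    exact ((hderiv t ht).const_mul _).mul_const _
  · change 1 / 2 * P' t * x ^ 2 + sInf (range (G ∘ hamiltonianArg (P t) x)) = 0
    rw [(hGmono.isLeast_range_comp hmin).csInf_eq, hGlin,
      hamiltonianArg_optimalControl x (by positivity), hric t ht]
    field_simp
    ring

theorem example2_HJB (T : ℝ) (hT : 0 < T)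
    (G : ℝ → ℝ)
    (hG : ∀ a : ℝ, G a = (max a 0 - 0.2 * max (-a) 0) / 2)
    (P P' : ℝ → ℝ)
    (hderiv : ∀ s ∈ Icc (0 : ℝ) T, HasDerivAt P (P' s) s)
    (hric : ∀ s ∈ Icc (0 : ℝ) T,
      P' s = -(5 * (P s) ^ 2 + 10 * P s + 1) / (1 + P s))
    (hPT : P T = 1) (hpos : ∀ s ∈ Icc (0 : ℝ) T, 0 < P s)
    (V : ℝ → ℝ → ℝ) (hV : ∀ t x, V t x = (1 / 2) * P t * x ^ 2)
    (t x : ℝ) (ht : t ∈ Icc (0 : ℝ) T) :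
    (HasDerivAt (fun s => V s x) ((1 / 2) * P' t * x ^ 2) t) ∧
    ((1 / 2) * P' t * x ^ 2 +
        sInf (Set.range (fun v : ℝ =>
          G ((x + v) ^ 2 * P t + 2 * (4 * x + v) * (P t * x) + x ^ 2 + v ^ 2))) = 0) ∧
    (V T x = (1 / 2) * x ^ 2) ∧
    (∀ v : ℝ,
      G ((x + (-2 * P t * x / (1 + P t))) ^ 2 * P t
          + 2 * (4 * x + (-2 * P t * x / (1 + P t))) * (P t * x) + x ^ 2
          + (-2 * P t * x / (1 + P t)) ^ 2)
        ≤ G ((x + v) ^ 2 * P t + 2 * (4 * x + v) * (P t * x) + x ^ 2 + v ^ 2)) ∧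
    (0 ≤ (x + (-2 * P t * x / (1 + P t))) ^ 2 * P t
        + 2 * (4 * x + (-2 * P t * x / (1 + P t))) * (P t * x) + x ^ 2
        + (-2 * P t * x / (1 + P t)) ^ 2) ∧
    (G ((x + (-2 * P t * x / (1 + P t))) ^ 2 * P t
          + 2 * (4 * x + (-2 * P t * x / (1 + P t))) * (P t * x) + x ^ 2
          + (-2 * P t * x / (1 + P t)) ^ 2)
      = (1 / 2) * ((x + (-2 * P t * x / (1 + P t))) ^ 2 * P t
          + 2 * (4 * x + (-2 * P t * x / (1 + P t))) * (P t * x) + x ^ 2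
          + (-2 * P t * x / (1 + P t)) ^ 2)) :=
  example2_HJB_general T G hG P P' hderiv hric hPT hpos V hV t x ht
end

section
/- Fix T > 1, v ∈ (1,2), and t = T−1. Define φ(s, x') = −(x' + (v/2)(T−s))² if x' > −(v/2)(T−s); φ(s,x') = 0 if −v(T−s) ≤ x' ≤ −(v/2)(T−s); and φ(s,x') = −(x' + v(T−s))² if x' < −v(T−s). Then φ is continuously differentiable in (s, x') on [t,T)×ℝ, and for every (s,x') with s ∈ [t,T): ∂_s φ(s,x') + G(2v ∂_{x'}φ(s,x')) = 0, where G(a) = ½(a⁺ − ½ a⁻). -/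
open Set

/-!
For `s < T` put `a = x' + (v/2)(T - s)` and `b = x' + v(T - s)`. Since `a ≤ b`, the three
branches of `φ` combine into `φ = -(a⁺)² - (b⁻)²`, and `y ↦ (y⁺)²` is `C¹` with derivative `2y⁺`,
which gives continuous partial derivatives. Moreover `a⁺ = 0` or `b⁻ = 0`, so at each point only
one of the two terms is active, and for each of them `∂ₛφ + G(2v ∂ₓφ) = 0` is a one-line identity.
-/

lemma hasDerivAt_max_zero_sq (u : ℝ) : HasDerivAt (fun y : ℝ => max y 0 ^ 2) (2 * max u 0) u := by
  have hleft : ∀ u ≤ 0, HasDerivWithinAt (fun y : ℝ => max y 0 ^ 2) (2 * max u 0) (Iic 0) u := by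
    intro u hu
    rw [max_eq_right hu, mul_zero]
    exact (hasDerivWithinAt_const u _ 0).congr (fun y hy => by simp [max_eq_right (mem_Iic.mp hy)])
      (by simp [max_eq_right hu])
  have hright : ∀ u ≥ 0, HasDerivWithinAt (fun y : ℝ => max y 0 ^ 2) (2 * max u 0) (Ici 0) u := by
    intro u hu
    rw [max_eq_left hu]
    have hsq : HasDerivAt (fun y : ℝ => y ^ 2) (2 * u) u := by simpa using hasDerivAt_pow 2 u
    exact hsq.hasDerivWithinAt.congr (fun y hy => by simp [max_eq_left (mem_Ici.mp hy)])
      (by simp [max_eq_left hu])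
  rcases lt_trichotomy u 0 with h | rfl | h
  · exact (hleft u h.le).hasDerivAt (Iic_mem_nhds h)
  · simpa [Iic_union_Ici] using (hleft 0 le_rfl).union (hright 0 le_rfl)
  · exact (hright u h.le).hasDerivAt (Ici_mem_nhds h)

theorem HasDerivAt.max_zero_sq {f : ℝ → ℝ} {f' x : ℝ} (hf : HasDerivAt f f' x) :
    HasDerivAt (fun y => max (f y) 0 ^ 2) (2 * max (f x) 0 * f') x :=
  (hasDerivAt_max_zero_sq (f x)).comp x hf

lemma ite_sq_eq_neg_max_sq_sub {p q : ℝ} (hpq : p ≤ q) (x : ℝ) :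
    (if x > -p then -(x + p) ^ 2 else if x < -q then -(x + q) ^ 2 else 0) =
      -max (x + p) 0 ^ 2 - max (-(x + q)) 0 ^ 2 := by
  split_ifs with h₁ h₂
  · rw [max_eq_left (by linarith), max_eq_right (by linarith)]; ring
  · rw [max_eq_right (by linarith), max_eq_left (by linarith)]; ring
  · rw [max_eq_right (by linarith), max_eq_right (by linarith)]; ring

lemma max_add_zero_eq_zero_or_of_le {p q : ℝ} (hpq : p ≤ q) (x : ℝ) :
    max (x + p) 0 = 0 ∨ max (-(x + q)) 0 = 0 := by
  rcases le_or_gt (x + p) 0 with h | h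
  · exact Or.inl (max_eq_right h)
  · exact Or.inr (max_eq_right (by linarith))

lemma hjb_residual_eq_zero_of_complementary {v m n : ℝ} (hv : 0 ≤ v) (hm : 0 ≤ m) (hn : 0 ≤ n)
    (hmn : m = 0 ∨ n = 0) :
    v * m - 2 * v * n + (max (2 * v * (-2 * m + 2 * n)) 0
      - 1 / 2 * max (-(2 * v * (-2 * m + 2 * n))) 0) / 2 = 0 := by
  rcases hmn with rfl | rfl
  · rw [max_eq_left (by positivity), max_eq_right (by nlinarith)]; ring
  · rw [max_eq_right (by nlinarith), max_eq_left (by nlinarith)]; ring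

theorem example3_phi_solves_PDE_general (T v : ℝ) (hv : v ∈ Ioo (1 : ℝ) 2)
    (t : ℝ)
    (G : ℝ → ℝ)
    (hG : ∀ a : ℝ, G a = (max a 0 - (1 / 2) * max (-a) 0) / 2)
    (φ : ℝ → ℝ → ℝ)
    (hφ : ∀ s x' : ℝ,
      φ s x' = if x' > -(v / 2) * (T - s) then -(x' + (v / 2) * (T - s)) ^ 2
        else if x' < -v * (T - s) then -(x' + v * (T - s)) ^ 2
        else 0) :
    ∃ φs φx : ℝ → ℝ → ℝ,
      ContinuousOn (fun p : ℝ × ℝ => (φs p.1 p.2, φx p.1 p.2)) (Ico t T ×ˢ univ) ∧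
      ∀ s ∈ Ico t T, ∀ x' : ℝ,
        HasDerivAt (fun r => φ r x') (φs s x') s ∧
        HasDerivAt (fun y => φ s y) (φx s x') x' ∧
        φs s x' + G (2 * v * φx s x') = 0 := by
  have hv₀ : 0 ≤ v := by linarith [hv.1]
  have hle : ∀ s ≤ T, v / 2 * (T - s) ≤ v * (T - s) := fun s hs => by nlinarith
  have hclosed : ∀ s ≤ T, ∀ y, φ s y =
      -max (y + v / 2 * (T - s)) 0 ^ 2 - max (-(y + v * (T - s))) 0 ^ 2 := fun s hs y => by
    rw [hφ, neg_mul, neg_mul]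
    exact ite_sq_eq_neg_max_sq_sub (hle s hs) y
  refine ⟨fun s x' => v * max (x' + v / 2 * (T - s)) 0 - 2 * v * max (-(x' + v * (T - s))) 0,
    fun s x' => -2 * max (x' + v / 2 * (T - s)) 0 + 2 * max (-(x' + v * (T - s))) 0,
    by fun_prop, fun s ⟨_, hs⟩ x' => ⟨?_, ?_, ?_⟩⟩
  · have hlin : ∀ c, HasDerivAt (fun r => x' + c * (T - r)) (-c) s := fun c => by
      simpa using (((hasDerivAt_id s).const_sub T).const_mul c).const_add x'
    have hderiv := (hlin (v / 2)).max_zero_sq.fun_neg.fun_sub (hlin v).fun_neg.max_zero_sq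
    refine (hderiv.congr_deriv (by ring)).congr_of_eventuallyEq ?_
    filter_upwards [Iio_mem_nhds hs] with r hr using hclosed r hr.le x'
  · have hlin : ∀ c, HasDerivAt (fun y => y + c) 1 x' := fun c => (hasDerivAt_id x').add_const c
    have hderiv := (hlin (v / 2 * (T - s))).max_zero_sq.fun_neg.fun_sub
      (hlin (v * (T - s))).fun_neg.max_zero_sq
    exact (hderiv.congr_deriv (by ring)).congr_of_eventuallyEq
      (Filter.Eventually.of_forall fun y => hclosed s hs.le y)
  · rw [hG]
    exact hjb_residual_eq_zero_of_complementary hv₀ (le_max_right _ _) (le_max_right _ _)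
      (max_add_zero_eq_zero_or_of_le (hle s hs.le) x')

theorem example3_phi_solves_PDE (T v : ℝ) (hT : 1 < T) (hv : v ∈ Ioo (1 : ℝ) 2)
    (t : ℝ) (ht : t = T - 1)
    (G : ℝ → ℝ)
    (hG : ∀ a : ℝ, G a = (max a 0 - (1 / 2) * max (-a) 0) / 2)
    (φ : ℝ → ℝ → ℝ)
    (hφ : ∀ s x' : ℝ,
      φ s x' = if x' > -(v / 2) * (T - s) then -(x' + (v / 2) * (T - s)) ^ 2
        else if x' < -v * (T - s) then -(x' + v * (T - s)) ^ 2
        else 0) :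
    ∃ φs φx : ℝ → ℝ → ℝ,
      ContinuousOn (fun p : ℝ × ℝ => (φs p.1 p.2, φx p.1 p.2)) (Ico t T ×ˢ univ) ∧
      ∀ s ∈ Ico t T, ∀ x' : ℝ,
        HasDerivAt (fun r => φ r x') (φs s x') s ∧
        HasDerivAt (fun y => φ s y) (φx s x') x' ∧
        φs s x' + G (2 * v * φx s x') = 0 :=
  example3_phi_solves_PDE_general T v hv t G hG φ hφ
end

section
/- Fix T > 1, t = T−1, v ∈ (1,2). Let γ: [t,T] → [0.5, 1] be measurable and suppose that for almost every s ∈ [t,T]: if v∫_t^s γ(θ)dθ − 1 > −(v/2)(T−s) then γ(s) = 0.5, and if v∫_t^s γ(θ)dθ − 1 < −v(T−s) then γ(s) = 1. Then −v(T−s) ≤ v∫_t^s γ(θ)dθ − 1 ≤ −(v/2)(T−s) for all s ∈ [t,T]; in particular v∫_t^T γ(θ)dθ = 1. -/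
/-! Both inequalities are instances of one barrier principle. If `G = x₀ + ∫ₐ f` starts at
`x₀ ≤ 0` and `f = 0` a.e. wherever `G > 0`, then `G` never becomes positive: between a point
where `G > 0` and the last point before it where `G ≤ 0`, `G` would be constant.
For the upper bound take `G s = v ∫ₜˢ γ - 1 + (v/2)(T - s)`, which is flat where `γ = 1/2`;
for the lower bound take `G s = 1 - v ∫ₜˢ γ - v(T - s)`, which is flat where `γ = 1`.
Their initial values `v/2 - 1` and `1 - v` are nonpositive because `v ∈ (1, 2)`. -/

open Set MeasureTheory

theorem ContinuousOn.exists_le_forall_Ioc_lt {α β : Type*} [ConditionallyCompleteLinearOrder α]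
    [TopologicalSpace α] [OrderTopology α] [LinearOrder β] [TopologicalSpace β]
    [OrderClosedTopology β] {G : α → β} {a b : α} {y : β} (hab : a ≤ b)
    (hG : ContinuousOn G (Icc a b)) (ha : G a ≤ y) :
    ∃ c ∈ Icc a b, G c ≤ y ∧ ∀ s ∈ Ioc c b, y < G s := by
  set S := Icc a b ∩ G ⁻¹' Iic y
  have hS : IsCompact S :=
    isCompact_Icc.of_isClosed_subset (hG.preimage_isClosed_of_isClosed isClosed_Icc isClosed_Iic)
      inter_subset_left
  obtain ⟨hc, hGc⟩ : sSup S ∈ S := hS.sSup_mem ⟨a, ⟨left_mem_Icc.2 hab, ha⟩⟩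
  refine ⟨sSup S, hc, hGc, fun s hs => ?_⟩
  by_contra! hGs
  have : s ≤ sSup S := le_csSup hS.bddAbove ⟨⟨hc.1.trans hs.1.le, hs.2⟩, hGs⟩
  exact this.not_gt hs.1

theorem add_intervalIntegral_nonpos_of_ae_eq_zero_of_pos {f : ℝ → ℝ} {a b x₀ : ℝ}
    (hf : IntervalIntegrable f volume a b) (hx₀ : x₀ ≤ 0)
    (hflat : ∀ᵐ s ∂volume.restrict (Icc a b), 0 < x₀ + ∫ θ in a..s, f θ → f s = 0) :
    ∀ s ∈ Icc a b, x₀ + ∫ θ in a..s, f θ ≤ 0 := by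
  intro s hs
  by_contra! hpos
  have hab : a ≤ b := hs.1.trans hs.2
  have hf' : ∀ {p q}, p ∈ Icc a b → q ∈ Icc a b → IntervalIntegrable f volume p q :=
    fun hp hq => hf.mono_set (uIcc_subset_uIcc (Icc_subset_uIcc hp) (Icc_subset_uIcc hq))
  have hcont : ContinuousOn (fun r => x₀ + ∫ θ in a..r, f θ) (Icc a s) := by
    have := intervalIntegral.continuousOn_primitive_interval'
      (hf' (left_mem_Icc.2 hab) hs) left_mem_uIcc
    rw [uIcc_of_le hs.1] at this
    exact continuousOn_const.add this
  obtain ⟨c, hc, hGc, hGpos⟩ := hcont.exists_le_forall_Ioc_lt hs.1 (by simpa using hx₀)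
  have hcab : c ∈ Icc a b := ⟨hc.1, hc.2.trans hs.2⟩
  have hflat_cs : ∫ θ in c..s, f θ = 0 := by
    have hflat' := (ae_restrict_iff' measurableSet_Icc).1 hflat
    rw [← intervalIntegral.integral_zero]
    refine intervalIntegral.integral_congr_ae ?_
    filter_upwards [hflat'] with r hr hrcs
    rw [uIoc_of_le hc.2] at hrcs
    exact hr ⟨hc.1.trans hrcs.1.le, hrcs.2.trans hs.2⟩ (hGpos r hrcs)
  have hsplit := intervalIntegral.integral_add_adjacent_intervals
    (hf' (left_mem_Icc.2 hab) hcab) (hf' hcab hs)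
  rw [hflat_cs, add_zero] at hsplit
  exact hpos.not_ge (hsplit ▸ hGc)

theorem Measurable.intervalIntegrable_of_mapsTo_Icc {f : ℝ → ℝ} {a b m M : ℝ}
    (hf : Measurable f) (hfab : MapsTo f (uIcc a b) (Icc m M)) :
    IntervalIntegrable f volume a b := by
  refine IntegrableOn.intervalIntegrable <|
    IntegrableOn.of_bound measure_Icc_lt_top hf.aestronglyMeasurable (|m| ⊔ |M|) ?_
  filter_upwards [ae_restrict_mem measurableSet_Icc] with s hs
  exact abs_le_max_abs_abs (hfab hs).1 (hfab hs).2

theorem intervalIntegral.integral_const_mul_add_const {f : ℝ → ℝ} {a b : ℝ}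
    (hf : IntervalIntegrable f volume a b) (c d : ℝ) :
    ∫ x in a..b, (c * f x + d) = c * (∫ x in a..b, f x) + d * (b - a) := by
  rw [integral_add (hf.const_mul c) intervalIntegrable_const, integral_const_mul, integral_const,
    smul_eq_mul, mul_comm d]

theorem affine_primitive_nonpos_of_ae_eq_zero_of_pos {f : ℝ → ℝ} {a b c d x₀ : ℝ}
    (hf : IntervalIntegrable f volume a b) (hx₀ : x₀ ≤ 0)
    (hflat : ∀ᵐ s ∂volume.restrict (Icc a b),
      0 < x₀ + c * (∫ θ in a..s, f θ) + d * (s - a) → c * f s + d = 0) :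
    ∀ s ∈ Icc a b, x₀ + c * (∫ θ in a..s, f θ) + d * (s - a) ≤ 0 := by
  have hf' : ∀ s ∈ Icc a b, IntervalIntegrable f volume a s := fun s hs =>
    hf.mono_set (uIcc_subset_uIcc left_mem_uIcc (Icc_subset_uIcc hs))
  have hrw : ∀ s ∈ Icc a b, x₀ + c * (∫ θ in a..s, f θ) + d * (s - a) =
      x₀ + ∫ θ in a..s, (c * f θ + d) := fun s hs => by
    rw [intervalIntegral.integral_const_mul_add_const (hf' s hs), add_assoc]
  intro s hs
  rw [hrw s hs]
  refine add_intervalIntegral_nonpos_of_ae_eq_zero_of_pos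
    ((hf.const_mul c).add intervalIntegrable_const) hx₀ ?_ s hs
  filter_upwards [hflat, ae_restrict_mem measurableSet_Icc] with r hr hrI hpos
  exact hr (by rwa [hrw r hrI])

theorem example3_gamma_constraint_general (T v : ℝ) (hv : v ∈ Ioo (1 : ℝ) 2)
    (t : ℝ) (ht : t = T - 1)
    (γ : ℝ → ℝ) (hmeas : Measurable γ)
    (hrange : ∀ s ∈ Icc t T, γ s ∈ Icc (0.5 : ℝ) 1)
    (hae : ∀ᵐ s ∂(volume.restrict (Icc t T)),
      ((v * ∫ θ in t..s, γ θ) - 1 > -(v / 2) * (T - s) → γ s = 0.5) ∧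
      ((v * ∫ θ in t..s, γ θ) - 1 < -v * (T - s) → γ s = 1)) :
    (∀ s ∈ Icc t T,
      -v * (T - s) ≤ (v * ∫ θ in t..s, γ θ) - 1 ∧
      (v * ∫ θ in t..s, γ θ) - 1 ≤ -(v / 2) * (T - s)) ∧
    (v * ∫ θ in t..T, γ θ) = 1 := by
  obtain ⟨hv1, hv2⟩ := hv
  have htT : t ≤ T := by linarith
  have hvt : v * t = v * T - v := by rw [ht]; ring
  have hγ : IntervalIntegrable γ volume t T :=
    hmeas.intervalIntegrable_of_mapsTo_Icc (by rwa [uIcc_of_le htT])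
  have hub := affine_primitive_nonpos_of_ae_eq_zero_of_pos (c := v) (d := -(v / 2))
    (x₀ := v / 2 - 1) hγ (by linarith) (by
      filter_upwards [hae] with s hs hpos
      rw [hs.1 (by linarith)]
      ring)
  have hlb := affine_primitive_nonpos_of_ae_eq_zero_of_pos (c := -v) (d := v)
    (x₀ := 1 - v) hγ (by linarith) (by
      filter_upwards [hae] with s hs hpos
      rw [hs.2 (by linarith)]
      ring)
  have hbounds : ∀ s ∈ Icc t T, -v * (T - s) ≤ (v * ∫ θ in t..s, γ θ) - 1 ∧
      (v * ∫ θ in t..s, γ θ) - 1 ≤ -(v / 2) * (T - s) := fun s hs =>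
    ⟨by linarith [hlb s hs], by linarith [hub s hs]⟩
  obtain ⟨hlT, huT⟩ := hbounds T (right_mem_Icc.2 htT)
  exact ⟨hbounds, by linarith⟩

theorem example3_gamma_constraint (T v : ℝ) (hT : 1 < T) (hv : v ∈ Ioo (1 : ℝ) 2)
    (t : ℝ) (ht : t = T - 1)
    (γ : ℝ → ℝ) (hmeas : Measurable γ)
    (hrange : ∀ s ∈ Icc t T, γ s ∈ Icc (0.5 : ℝ) 1)
    (hae : ∀ᵐ s ∂(volume.restrict (Icc t T)),
      ((v * ∫ θ in t..s, γ θ) - 1 > -(v / 2) * (T - s) → γ s = 0.5) ∧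
      ((v * ∫ θ in t..s, γ θ) - 1 < -v * (T - s) → γ s = 1)) :
    (∀ s ∈ Icc t T,
      -v * (T - s) ≤ (v * ∫ θ in t..s, γ θ) - 1 ∧
      (v * ∫ θ in t..s, γ θ) - 1 ≤ -(v / 2) * (T - s)) ∧
    (v * ∫ θ in t..T, γ θ) = 1 :=
  example3_gamma_constraint_general T v hv t ht γ hmeas hrange hae
end
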